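/- Let (q, p, H) solve the Painlevé III Hamiltonian system with parameters v1, v2, η0, η∞ ∈ ℂ on an open set U ⊆ ℂ with 0 ∉ U, and let h(t) := t·H(t) + (2v1+1)²/8. Then for all t ∈ U: (t·h''(t))² = 8·(h(t) − t·h'(t))·(h'(t) − 4·η0·p(t))². (This is the squared, radical-free form of the canonical-variable recovery formula 4η0·p = h' − ε·t·h''/√(8(h − t·h')).) -/

import Mathlib

/-! Write `K(t, q, p) = t·H` for the polynomial Hamiltonian, so that Hamilton's
equations read `t q' = ∂ₚK` and `t p' = -∂_qK`. Along a solution the `q`- and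
`p`-contributions to `(tH)'` then cancel, so `h' = ∂ₜK(q, p)` is a polynomial in `q, p`
alone, and one more differentiation gives `t h'' = {∂ₜK, K}` (Poisson bracket). The
claimed relation is then a polynomial identity in `t, q, p`. -/

open Complex

/-- `(q, p, H)` solves the Painlevé III Hamiltonian system with parameters
`v1, v2, η0, ηinf` on an open set `U ⊆ ℂ` with `0 ∉ U`. -/
def SolvesPIII (v1 v2 η0 ηinf : ℂ) (U : Set ℂ) (q p H : ℂ → ℂ) : Prop :=
  IsOpen U ∧ (0 : ℂ) ∉ U ∧
    DifferentiableOn ℂ q U ∧ DifferentiableOn ℂ p U ∧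
    (∀ t ∈ U, t * H t =
      2 * q t ^ 2 * p t ^ 2
        - (2 * ηinf * t * q t ^ 2 + (2 * v1 + 1) * q t - 2 * η0 * t) * p t
        + ηinf * (v1 + v2) * t * q t) ∧
    (∀ t ∈ U, t * deriv q t =
      4 * q t ^ 2 * p t - 2 * ηinf * t * q t ^ 2 - (2 * v1 + 1) * q t + 2 * η0 * t) ∧
    (∀ t ∈ U, t * deriv p t =
      -4 * q t * p t ^ 2 + 4 * ηinf * t * q t * p t + (2 * v1 + 1) * p t
        - ηinf * (v1 + v2) * t)

namespace PainleveIII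

variable (v1 v2 η0 ηinf : ℂ)

def hamiltonian (t x y : ℂ) : ℂ :=
  2 * x ^ 2 * y ^ 2 - (2 * ηinf * t * x ^ 2 + (2 * v1 + 1) * x - 2 * η0 * t) * y
    + ηinf * (v1 + v2) * t * x

def hamiltonianDt (x y : ℂ) : ℂ :=
  -2 * ηinf * x ^ 2 * y + 2 * η0 * y + ηinf * (v1 + v2) * x

def hamiltonianDx (t x y : ℂ) : ℂ :=
  4 * x * y ^ 2 - 4 * ηinf * t * x * y - (2 * v1 + 1) * y + ηinf * (v1 + v2) * t

def hamiltonianDy (t x y : ℂ) : ℂ :=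
  4 * x ^ 2 * y - 2 * ηinf * t * x ^ 2 - (2 * v1 + 1) * x + 2 * η0 * t

theorem hasDerivAt_hamiltonian_comp {q p : ℂ → ℂ} {q' p' t : ℂ}
    (hq : HasDerivAt q q' t) (hp : HasDerivAt p p' t) :
    HasDerivAt (fun u => hamiltonian v1 v2 η0 ηinf u (q u) (p u))
      (hamiltonianDt v1 v2 η0 ηinf (q t) (p t) + hamiltonianDx v1 v2 ηinf t (q t) (p t) * q'
        + hamiltonianDy v1 η0 ηinf t (q t) (p t) * p') t := by
  have hid := hasDerivAt_id' t
  have hcoeff := ((((hid.fun_mul (hq.fun_pow 2)).const_mul (2 * ηinf)).fun_add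
    (hq.const_mul (2 * v1 + 1))).fun_sub (hid.const_mul (2 * η0)))
  have hK := ((((hq.fun_pow 2).fun_mul (hp.fun_pow 2)).const_mul 2).fun_sub
    (hcoeff.fun_mul hp)).fun_add ((hid.fun_mul hq).const_mul (ηinf * (v1 + v2)))
  refine (hK.congr_deriv ?_).congr_of_eventuallyEq (.of_forall fun u => ?_)
  · simp only [hamiltonianDt, hamiltonianDx, hamiltonianDy]; push_cast; ring
  · simp only [hamiltonian]; ring

theorem hasDerivAt_hamiltonianDt_comp {q p : ℂ → ℂ} {q' p' t : ℂ}
    (hq : HasDerivAt q q' t) (hp : HasDerivAt p p' t) :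
    HasDerivAt (fun u => hamiltonianDt v1 v2 η0 ηinf (q u) (p u))
      ((ηinf * (v1 + v2) - 4 * ηinf * q t * p t) * q'
        + (2 * η0 - 2 * ηinf * q t ^ 2) * p') t := by
  have hD := ((((hq.fun_pow 2).fun_mul hp).const_mul (-2 * ηinf)).fun_add
    (hp.const_mul (2 * η0))).fun_add (hq.const_mul (ηinf * (v1 + v2)))
  refine (hD.congr_deriv ?_).congr_of_eventuallyEq (.of_forall fun u => ?_)
  · push_cast; ring
  · simp only [hamiltonianDt]; ring

theorem sq_bracket_hamiltonianDt_hamiltonian (t x y : ℂ) :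
    ((ηinf * (v1 + v2) - 4 * ηinf * x * y) * hamiltonianDy v1 η0 ηinf t x y
        - (2 * η0 - 2 * ηinf * x ^ 2) * hamiltonianDx v1 v2 ηinf t x y) ^ 2 =
      8 * (hamiltonian v1 v2 η0 ηinf t x y + (2 * v1 + 1) ^ 2 / 8
          - t * hamiltonianDt v1 v2 η0 ηinf x y)
        * (hamiltonianDt v1 v2 η0 ηinf x y - 4 * η0 * y) ^ 2 := by
  simp only [hamiltonian, hamiltonianDt, hamiltonianDx, hamiltonianDy]
  ring

end PainleveIII

namespace SolvesPIII

open PainleveIII Filter Topology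

variable {v1 v2 η0 ηinf : ℂ} {U : Set ℂ} {q p H : ℂ → ℂ} {t : ℂ}

theorem ne_zero (hsol : SolvesPIII v1 v2 η0 ηinf U q p H) (ht : t ∈ U) : t ≠ 0 :=
  fun h => hsol.2.1 (h ▸ ht)

theorem mem_nhds (hsol : SolvesPIII v1 v2 η0 ηinf U q p H) (ht : t ∈ U) : U ∈ 𝓝 t :=
  hsol.1.mem_nhds ht

theorem hasDerivAt_q (hsol : SolvesPIII v1 v2 η0 ηinf U q p H) (ht : t ∈ U) :
    HasDerivAt q (deriv q t) t :=
  (hsol.2.2.1.differentiableAt (hsol.mem_nhds ht)).hasDerivAt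

theorem hasDerivAt_p (hsol : SolvesPIII v1 v2 η0 ηinf U q p H) (ht : t ∈ U) :
    HasDerivAt p (deriv p t) t :=
  (hsol.2.2.2.1.differentiableAt (hsol.mem_nhds ht)).hasDerivAt

theorem mul_H_eq (hsol : SolvesPIII v1 v2 η0 ηinf U q p H) (ht : t ∈ U) :
    t * H t = hamiltonian v1 v2 η0 ηinf t (q t) (p t) :=
  hsol.2.2.2.2.1 t ht

theorem mul_deriv_q (hsol : SolvesPIII v1 v2 η0 ηinf U q p H) (ht : t ∈ U) :
    t * deriv q t = hamiltonianDy v1 η0 ηinf t (q t) (p t) :=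
  hsol.2.2.2.2.2.1 t ht

theorem mul_deriv_p (hsol : SolvesPIII v1 v2 η0 ηinf U q p H) (ht : t ∈ U) :
    t * deriv p t = -hamiltonianDx v1 v2 ηinf t (q t) (p t) := by
  rw [hsol.2.2.2.2.2.2 t ht, hamiltonianDx]
  ring

theorem hasDerivAt_mul_H (hsol : SolvesPIII v1 v2 η0 ηinf U q p H) (ht : t ∈ U) :
    HasDerivAt (fun u => u * H u) (hamiltonianDt v1 v2 η0 ηinf (q t) (p t)) t := by
  refine ((hasDerivAt_hamiltonian_comp v1 v2 η0 ηinf (hsol.hasDerivAt_q ht)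
    (hsol.hasDerivAt_p ht)).congr_deriv ?_).congr_of_eventuallyEq ?_
  · refine mul_left_cancel₀ (hsol.ne_zero ht) ?_
    linear_combination hamiltonianDx v1 v2 ηinf t (q t) (p t) * hsol.mul_deriv_q ht
      + hamiltonianDy v1 η0 ηinf t (q t) (p t) * hsol.mul_deriv_p ht
  · filter_upwards [hsol.mem_nhds ht] with u hu using hsol.mul_H_eq hu

theorem deriv_mul_H_add_const (hsol : SolvesPIII v1 v2 η0 ηinf U q p H) (c : ℂ) (ht : t ∈ U) :
    deriv (fun u => u * H u + c) t = hamiltonianDt v1 v2 η0 ηinf (q t) (p t) :=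
  ((hsol.hasDerivAt_mul_H ht).add_const c).deriv

theorem mul_deriv_deriv_mul_H_add_const (hsol : SolvesPIII v1 v2 η0 ηinf U q p H) (c : ℂ)
    (ht : t ∈ U) :
    t * deriv (deriv (fun u => u * H u + c)) t =
      (ηinf * (v1 + v2) - 4 * ηinf * q t * p t) * hamiltonianDy v1 η0 ηinf t (q t) (p t)
        - (2 * η0 - 2 * ηinf * q t ^ 2) * hamiltonianDx v1 v2 ηinf t (q t) (p t) := by
  have hderiv : deriv (fun u => u * H u + c) =ᶠ[𝓝 t]
      fun u => hamiltonianDt v1 v2 η0 ηinf (q u) (p u) := by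
    filter_upwards [hsol.mem_nhds ht] with u hu using hsol.deriv_mul_H_add_const c hu
  rw [hderiv.deriv_eq, (hasDerivAt_hamiltonianDt_comp v1 v2 η0 ηinf (hsol.hasDerivAt_q ht)
    (hsol.hasDerivAt_p ht)).deriv]
  linear_combination (ηinf * (v1 + v2) - 4 * ηinf * q t * p t) * hsol.mul_deriv_q ht
    + (2 * η0 - 2 * ηinf * q t ^ 2) * hsol.mul_deriv_p ht

end SolvesPIII

/-- Squared, radical-free form of the recovery formula
`4η0·p = h' − ε·th''/√(8(h − th'))` for the canonical variable `p` in terms of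
the auxiliary Hamiltonian `h(t) = tH(t) + (2v1+1)²/8` of Painlevé III. -/
theorem painleveIII_recover_p (v1 v2 η0 ηinf : ℂ) (U : Set ℂ)
    (q p H h : ℂ → ℂ)
    (hsol : SolvesPIII v1 v2 η0 ηinf U q p H)
    (hdef : h = fun t => t * H t + (2 * v1 + 1) ^ 2 / 8) :
    ∀ t ∈ U,
      (t * deriv (deriv h) t) ^ 2 =
        8 * (h t - t * deriv h t) * (deriv h t - 4 * η0 * p t) ^ 2 := by
  subst hdef
  intro t ht
  rw [hsol.mul_deriv_deriv_mul_H_add_const _ ht, hsol.deriv_mul_H_add_const _ ht]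
  beta_reduce
  rw [hsol.mul_H_eq ht]
  exact PainleveIII.sq_bracket_hamiltonianDt_hamiltonian v1 v2 η0 ηinf t (q t) (p t)
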